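/- arXiv:2205.06387 — 2 statements merged into one kernel-verified Lean document; each statement's English description precedes it below -/
import Mathlib

section
/- Let I₁, I₂ : ℝ³ → ℝ be continuous functions of polynomial growth, i.e. there exist C > 0 and N ∈ ℕ with |Iⱼ(z)| ≤ C(1+|z|)^N for all z ∈ ℝ³ and j = 1,2. If (I₁ * μ)(v) = (I₂ * μ)(v) for every v ∈ ℝ³, then I₁(z) = I₂(z) for every z ∈ ℝ³. -/
/-!
Write `f = I₁ - I₂` and `g(u) = f(u) e^{-|u|²}`. Expanding `|v - u|² = |v|² - 2⟪v, u⟫ + |u|²`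
shows that `(f * μ)(v) = e^{-|v|²} ∫ g(u) e^{⟪2v, u⟫} du`, so the hypothesis says that the
two-sided Laplace transform of `g` vanishes identically; polynomial growth of `f` makes all of
these integrals converge. The finite measures `g⁺ du` and `g⁻ du` then have the same Laplace
transform. Along every line `t ↦ tξ` their moment generating functions agree on all of `ℝ`, hence,
by analytic continuation, at `t = i`: the two measures have the same characteristic function, so
they coincide. Thus `g = 0` almost everywhere, and everywhere by continuity.
-/

open MeasureTheory Real ProbabilityTheory
open scoped RealInnerProductSpace

theorem MeasureTheory.Measure.ext_of_integral_exp_inner_eq {E : Type*} [NormedAddCommGroup E]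
    [InnerProductSpace ℝ E] [CompleteSpace E] [SecondCountableTopology E] [MeasurableSpace E]
    [BorelSpace E] {μ ν : Measure E} [IsFiniteMeasure μ] [IsFiniteMeasure ν]
    (hμ : ∀ v, Integrable (fun x ↦ rexp ⟪v, x⟫) μ)
    (h : ∀ v, ∫ x, rexp ⟪v, x⟫ ∂μ = ∫ x, rexp ⟪v, x⟫ ∂ν) : μ = ν := by
  refine Measure.ext_of_charFun (funext fun ξ ↦ ?_)
  set X : E → ℝ := fun x ↦ ⟪ξ, x⟫
  have hmgf : mgf X μ = mgf X ν := funext fun t ↦ by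
    simpa only [mgf, X, real_inner_smul_left] using h (t • ξ)
  have hzero : μ = 0 ↔ ν = 0 := by
    have hmass := h 0
    simp only [inner_zero_left, Real.exp_zero, integral_const, smul_eq_mul, mul_one] at hmass
    rw [← Measure.measure_univ_eq_zero, ← Measure.measure_univ_eq_zero, ← measureReal_eq_zero_iff,
      ← measureReal_eq_zero_iff, hmass]
  have hX : integrableExpSet X μ = Set.univ := Set.eq_univ_of_forall fun t ↦ by
    simpa only [integrableExpSet, Set.mem_ofPred_eq, X, real_inner_smul_left] using hμ (t • ξ)
  have hI := eqOn_complexMGF_of_mgf' hmgf hzero (x := Complex.I) (by simp [hX])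
  simpa [complexMGF, charFun_apply, X, mul_comm, real_inner_comm] using hI

section WithDensityOfReal

variable {α : Type*} [MeasurableSpace α] {ρ : Measure α} {f φ : α → ℝ}

lemma MeasureTheory.Integrable.max_zero_mul (hf : AEMeasurable f ρ)
    (hφ : AEStronglyMeasurable φ ρ) (hfφ : Integrable (fun x ↦ f x * φ x) ρ) :
    Integrable (fun x ↦ max (f x) 0 * φ x) ρ := by
  refine hfφ.mono ((hf.max aemeasurable_const).aestronglyMeasurable.mul hφ)
    (.of_forall fun x ↦ ?_)
  rw [norm_mul, norm_mul, Real.norm_of_nonneg (le_max_right _ _)]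
  gcongr
  exact max_le (le_abs_self _) (abs_nonneg _)

lemma integral_withDensity_ofReal (hf : AEMeasurable f ρ) :
    ∫ x, φ x ∂ρ.withDensity (fun x ↦ ENNReal.ofReal (f x)) = ∫ x, max (f x) 0 * φ x ∂ρ := by
  simp [integral_withDensity_eq_integral_toReal_smul₀ hf.ennreal_ofReal (by simp),
    ENNReal.toReal_ofReal']

lemma integrable_withDensity_ofReal (hf : AEMeasurable f ρ) (hφ : AEStronglyMeasurable φ ρ)
    (hfφ : Integrable (fun x ↦ f x * φ x) ρ) :
    Integrable φ (ρ.withDensity fun x ↦ ENNReal.ofReal (f x)) := by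
  rw [integrable_withDensity_iff_integrable_smul₀' hf.ennreal_ofReal (by simp)]
  simpa [ENNReal.toReal_ofReal'] using hfφ.max_zero_mul hf hφ

end WithDensityOfReal

theorem ae_eq_zero_of_integral_mul_exp_inner_eq_zero {E : Type*} [NormedAddCommGroup E]
    [InnerProductSpace ℝ E] [CompleteSpace E] [SecondCountableTopology E] [MeasurableSpace E]
    [BorelSpace E] {ρ : Measure E} {g : E → ℝ}
    (hg : ∀ v, Integrable (fun x ↦ g x * rexp ⟪v, x⟫) ρ)
    (h : ∀ v, ∫ x, g x * rexp ⟪v, x⟫ ∂ρ = 0) : g =ᵐ[ρ] 0 := by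
  have hgi : Integrable g ρ := by simpa using hg 0
  have hgm : AEMeasurable g ρ := hgi.aemeasurable
  have hgm' : AEMeasurable (fun x ↦ -g x) ρ := hgm.neg
  have hexp (v : E) : AEStronglyMeasurable (fun x ↦ rexp ⟪v, x⟫) ρ := by fun_prop
  have hneg (v : E) : Integrable (fun x ↦ -g x * rexp ⟪v, x⟫) ρ := by simpa using (hg v).neg
  have := isFiniteMeasure_withDensity_ofReal hgi.2
  have : IsFiniteMeasure (ρ.withDensity fun x ↦ ENNReal.ofReal (-g x)) :=
    isFiniteMeasure_withDensity_ofReal hgi.neg.2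
  have hpart : ρ.withDensity (fun x ↦ ENNReal.ofReal (g x))
      = ρ.withDensity (fun x ↦ ENNReal.ofReal (-g x)) := by
    refine Measure.ext_of_integral_exp_inner_eq
      (fun v ↦ integrable_withDensity_ofReal hgm (hexp v) (hg v)) fun v ↦ ?_
    rw [integral_withDensity_ofReal hgm, integral_withDensity_ofReal hgm', ← sub_eq_zero,
      ← integral_sub ((hg v).max_zero_mul hgm (hexp v)) ((hneg v).max_zero_mul hgm' (hexp v))]
    simpa only [← sub_mul, max_zero_sub_max_neg_zero_eq_self] using h v
  have hfin : ∫⁻ x, ENNReal.ofReal (g x) ∂ρ ≠ ⊤ := by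
    simpa using measure_ne_top (ρ.withDensity fun x ↦ ENNReal.ofReal (g x)) Set.univ
  filter_upwards [(withDensity_eq_iff hgm.ennreal_ofReal hgm'.ennreal_ofReal hfin).1 hpart]
    with x hx
  have hmax := congrArg ENNReal.toReal hx
  rw [ENNReal.toReal_ofReal', ENNReal.toReal_ofReal'] at hmax
  rw [Pi.zero_apply, ← max_zero_sub_max_neg_zero_eq_self (g x), hmax, sub_self]

lemma one_add_pow_le_exp {r : ℝ} (hr : 0 ≤ 1 + r) (N : ℕ) :
    (1 + r) ^ N ≤ rexp ((N ^ 2 + r ^ 2) / 2) :=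
  calc (1 + r) ^ N ≤ rexp r ^ N := by gcongr; linarith [add_one_le_exp r]
    _ = rexp (N * r) := (exp_nat_mul r N).symm
    _ ≤ rexp ((N ^ 2 + r ^ 2) / 2) := by gcongr; nlinarith [sq_nonneg (N - r)]

section Gaussian

variable {V : Type*} [NormedAddCommGroup V] [InnerProductSpace ℝ V] [FiniteDimensional ℝ V]
  [MeasurableSpace V] [BorelSpace V]

lemma integrable_exp_neg_mul_sq_norm_add_inner {b : ℝ} (hb : 0 < b) (w : V) :
    Integrable (fun x : V ↦ rexp (-b * ‖x‖ ^ 2 + ⟪w, x⟫)) := by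
  refine (GaussianFourier.integrable_cexp_neg_mul_sq_norm_add (b := b) (by simpa) 1 w).norm.congr
    (.of_forall fun x ↦ ?_)
  simp [Complex.norm_exp, ← Complex.ofReal_pow]

lemma integrable_mul_exp_neg_sq_norm_mul_exp_inner {f : V → ℝ} (hf : AEStronglyMeasurable f)
    {C : ℝ} {N : ℕ} (hbound : ∀ x, |f x| ≤ C * (1 + ‖x‖) ^ N) (w : V) :
    Integrable (fun x ↦ f x * rexp (-‖x‖ ^ 2) * rexp ⟪w, x⟫) := by
  have hC : 0 ≤ C := by simpa using (abs_nonneg _).trans (hbound 0)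
  refine ((integrable_exp_neg_mul_sq_norm_add_inner (b := 1 / 2) (by norm_num) w).const_mul
    (C * rexp (N ^ 2 / 2))).mono' (by fun_prop) (.of_forall fun x ↦ ?_)
  calc ‖f x * rexp (-‖x‖ ^ 2) * rexp ⟪w, x⟫‖
      = |f x| * rexp (-‖x‖ ^ 2) * rexp ⟪w, x⟫ := by simp
    _ ≤ C * rexp ((N ^ 2 + ‖x‖ ^ 2) / 2) * rexp (-‖x‖ ^ 2) * rexp ⟪w, x⟫ := by
        gcongr
        exact (hbound x).trans (by gcongr; exact one_add_pow_le_exp (by positivity) N)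
    _ = C * rexp (N ^ 2 / 2) * rexp (-(1 / 2) * ‖x‖ ^ 2 + ⟪w, x⟫) := by
        rw [mul_assoc C, mul_assoc C, mul_assoc C, ← exp_add, ← exp_add, ← exp_add]
        ring_nf

end Gaussian

lemma integral_comp_sub_mul_exp_neg_sq_norm {V : Type*} [NormedAddCommGroup V]
    [InnerProductSpace ℝ V] [MeasurableSpace V] [BorelSpace V] (μ : Measure V)
    [μ.IsAddLeftInvariant] [μ.IsNegInvariant] (f : V → ℝ) (v : V) :
    ∫ u, f (v - u) * rexp (-‖u‖ ^ 2) ∂μ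
      = rexp (-‖v‖ ^ 2) * ∫ u, f u * rexp (-‖u‖ ^ 2) * rexp ⟪(2 : ℝ) • v, u⟫ ∂μ := by
  rw [← integral_sub_left_eq_self _ μ v, ← integral_const_mul]
  congr 1 with u
  rw [sub_sub_cancel, norm_sub_sq_real, real_inner_smul_left, mul_left_comm, mul_assoc,
    ← exp_add, ← exp_add]
  ring_nf

theorem gaussWeierstrass_injective_polyGrowth_general
    (I₁ I₂ : EuclideanSpace ℝ (Fin 3) → ℝ)
    (hI₁c : Continuous I₁) (hI₂c : Continuous I₂)
    (C : ℝ) (N : ℕ)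
    (hI₁ : ∀ z, |I₁ z| ≤ C * (1 + ‖z‖) ^ N)
    (hI₂ : ∀ z, |I₂ z| ≤ C * (1 + ‖z‖) ^ N)
    (h : ∀ v : EuclideanSpace ℝ (Fin 3),
      (∫ u, I₁ (v - u) * Real.exp (-‖u‖ ^ 2)) = ∫ u, I₂ (v - u) * Real.exp (-‖u‖ ^ 2)) :
    ∀ z, I₁ z = I₂ z := by
  set g : EuclideanSpace ℝ (Fin 3) → ℝ :=
    fun u ↦ I₁ u * rexp (-‖u‖ ^ 2) - I₂ u * rexp (-‖u‖ ^ 2)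
  have hint₁ := integrable_mul_exp_neg_sq_norm_mul_exp_inner hI₁c.aestronglyMeasurable hI₁
  have hint₂ := integrable_mul_exp_neg_sq_norm_mul_exp_inner hI₂c.aestronglyMeasurable hI₂
  have hint (w) : Integrable (fun u ↦ g u * rexp ⟪w, u⟫) := by
    simp only [g, sub_mul]
    exact (hint₁ w).sub (hint₂ w)
  have hlaplace (w) : ∫ u, g u * rexp ⟪w, u⟫ = 0 := by
    have hw := h ((1 / 2 : ℝ) • w)
    rw [integral_comp_sub_mul_exp_neg_sq_norm, integral_comp_sub_mul_exp_neg_sq_norm, smul_smul,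
      mul_one_div_cancel two_ne_zero, one_smul] at hw
    simp only [g, sub_mul]
    rw [integral_sub (hint₁ w) (hint₂ w), mul_left_cancel₀ (exp_ne_zero _) hw, sub_self]
  have hg : g = 0 := (Continuous.ae_eq_iff_eq volume (by fun_prop) continuous_const).1
    (ae_eq_zero_of_integral_mul_exp_inner_eq_zero hint hlaplace)
  intro z
  simpa [g, sub_eq_zero] using congrFun hg z

/-- **Injectivity of the Gauss–Weierstrass transform on continuous functions of
polynomial growth on ℝ³.** If `I₁, I₂ : ℝ³ → ℝ` are continuous with
`|Iⱼ(z)| ≤ C(1+|z|)^N` and their Gauss–Weierstrass transforms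
`(I * μ)(v) = ∫ I(v−u) exp(−|u|²) du` agree for every `v`, then `I₁ = I₂`. -/
theorem gaussWeierstrass_injective_polyGrowth
    (I₁ I₂ : EuclideanSpace ℝ (Fin 3) → ℝ)
    (hI₁c : Continuous I₁) (hI₂c : Continuous I₂)
    (C : ℝ) (hC : 0 < C) (N : ℕ)
    (hI₁ : ∀ z, |I₁ z| ≤ C * (1 + ‖z‖) ^ N)
    (hI₂ : ∀ z, |I₂ z| ≤ C * (1 + ‖z‖) ^ N)
    (h : ∀ v : EuclideanSpace ℝ (Fin 3),
      (∫ u, I₁ (v - u) * Real.exp (-‖u‖ ^ 2)) = ∫ u, I₂ (v - u) * Real.exp (-‖u‖ ^ 2)) :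
    ∀ z, I₁ z = I₂ z :=
  gaussWeierstrass_injective_polyGrowth_general I₁ I₂ hI₁c hI₂c C N hI₁ hI₂ h
end

section
/- Let f₁, f₂ : (0,∞) → ℝ be measurable functions of polynomial growth, i.e. there exist C > 0 and N ∈ ℕ with |fⱼ(r)| ≤ C(1+r)^N for all r > 0 and j = 1,2. If ∫_{ℝ²} exp(−|y+ζ|²) f₁(|y|) dy = ∫_{ℝ²} exp(−|y+ζ|²) f₂(|y|) dy for every ζ ∈ ℝ², then f₁(r) = f₂(r) for almost every r > 0. -/
/-!
Put `g = f₁ - f₂` and `G y = exp (-‖y‖²) g ‖y‖`. Completing the square, `exp ⟪y, w⟫ G y` is a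
constant multiple of the kernel `exp (-‖y - w / 2‖²) g ‖y‖`, so the hypothesis says that the
two-sided Laplace transform of `G` vanishes identically. The positive and negative parts of `G`
are then densities of two finite measures with the same Laplace transform; it is finite on all
of the space, hence analytic, so their characteristic functions agree and the measures coincide,
i.e. `G = 0` a.e. Integrating in polar coordinates turns `g ‖y‖ = 0` for a.e. `y` into `g r = 0`
for a.e. `r > 0`.
-/

open MeasureTheory Real ProbabilityTheory Set
open scoped RealInnerProductSpace

section Laplace

variable {E : Type*} [NormedAddCommGroup E] [InnerProductSpace ℝ E] [CompleteSpace E]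
  [SecondCountableTopology E] [MeasurableSpace E] [BorelSpace E]

theorem MeasureTheory.Measure.ext_of_integral_exp_inner {μ ν : Measure E}
    [IsFiniteMeasure μ] [IsFiniteMeasure ν] (hμ : ∀ w, Integrable (fun x ↦ rexp ⟪x, w⟫) μ)
    (h : ∀ w, ∫ x, rexp ⟪x, w⟫ ∂μ = ∫ x, rexp ⟪x, w⟫ ∂ν) : μ = ν := by
  refine Measure.ext_of_charFun (funext fun w ↦ ?_)
  have hmgf : mgf (⟪·, w⟫) μ = mgf (⟪·, w⟫) ν := funext fun t ↦ by
    simpa [mgf, real_inner_smul_right] using h (t • w)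
  have hmass : μ = 0 ↔ ν = 0 := by
    have h0 := h 0
    simp only [inner_zero_right, Real.exp_zero, integral_const, smul_eq_mul, mul_one] at h0
    rw [← Measure.measure_univ_eq_zero, ← Measure.measure_univ_eq_zero, ← measureReal_eq_zero_iff,
      ← measureReal_eq_zero_iff, h0]
  have hstrip : Complex.I.re ∈ interior (integrableExpSet (⟪·, w⟫) μ) := by
    have : integrableExpSet (⟪·, w⟫) μ = univ := eq_univ_of_forall fun t ↦ by
      simpa [integrableExpSet, real_inner_smul_right] using hμ (t • w)
    simp [this]
  simpa [complexMGF, charFun_apply, mul_comm] using eqOn_complexMGF_of_mgf' hmgf hmass hstrip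

theorem ae_eq_zero_of_integral_exp_inner_mul_eq_zero {μ : Measure E} {G : E → ℝ}
    (hG : ∀ w, Integrable (fun x ↦ rexp ⟪x, w⟫ * G x) μ)
    (h : ∀ w, ∫ x, rexp ⟪x, w⟫ * G x ∂μ = 0) : G =ᵐ[μ] 0 := by
  have hGi : Integrable G μ := by simpa using hG 0
  have := isFiniteMeasure_withDensity_ofReal hGi.2
  have := isFiniteMeasure_withDensity_ofReal (f := fun x ↦ -G x) hGi.neg.2
  have hpart (F : E → ℝ) (hF : AEMeasurable F μ) (w : E) :
      (Integrable (fun x ↦ rexp ⟪x, w⟫) (μ.withDensity fun x ↦ ENNReal.ofReal (F x)) ↔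
        Integrable (fun x ↦ max (rexp ⟪x, w⟫ * F x) 0) μ) ∧
      ∫ x, rexp ⟪x, w⟫ ∂μ.withDensity (fun x ↦ ENNReal.ofReal (F x)) =
        ∫ x, max (rexp ⟪x, w⟫ * F x) 0 ∂μ := by
    have hlt : ∀ᵐ x ∂μ, ENNReal.ofReal (F x) < ⊤ := ae_of_all _ fun _ ↦ ENNReal.ofReal_lt_top
    have hmax (x : E) :
        (ENNReal.ofReal (F x)).toReal • rexp ⟪x, w⟫ = max (rexp ⟪x, w⟫ * F x) 0 := by
      rw [ENNReal.toReal_ofReal', smul_eq_mul, mul_comm, mul_max_of_nonneg _ _ (exp_pos _).le,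
        mul_zero]
    simp only [integrable_withDensity_iff_integrable_smul₀' hF.ennreal_ofReal hlt,
      integral_withDensity_eq_integral_toReal_smul₀ hF.ennreal_ofReal hlt, hmax, true_and]
  have hparts : μ.withDensity (fun x ↦ ENNReal.ofReal (G x)) =
      μ.withDensity (fun x ↦ ENNReal.ofReal (-G x)) := by
    refine Measure.ext_of_integral_exp_inner
      (fun w ↦ (hpart G hGi.aemeasurable w).1.2 (hG w).pos_part) fun w ↦ ?_
    rw [(hpart G hGi.aemeasurable w).2, (hpart (fun x ↦ -G x) hGi.neg.aemeasurable w).2,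
      ← sub_eq_zero, ← integral_sub (hG w).pos_part (by simpa using (hG w).neg.pos_part)]
    simpa [max_zero_sub_max_neg_zero_eq_self] using h w
  filter_upwards [(withDensity_eq_iff hGi.aemeasurable.ennreal_ofReal
    hGi.neg.aemeasurable.ennreal_ofReal hGi.lintegral_lt_top.ne).1 hparts] with x hx
  rw [Pi.neg_apply] at hx
  rcases le_total (G x) 0 with hx0 | hx0
  · rw [ENNReal.ofReal_of_nonpos hx0, eq_comm, ENNReal.ofReal_eq_zero] at hx
    exact le_antisymm hx0 (by simpa using hx)
  · rw [ENNReal.ofReal_of_nonpos (neg_nonpos.2 hx0), ENNReal.ofReal_eq_zero] at hx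
    exact le_antisymm hx hx0

end Laplace

theorem ae_restrict_Ioi_of_ae_norm {E : Type*} [NormedAddCommGroup E] [NormedSpace ℝ E]
    [Nontrivial E] [FiniteDimensional ℝ E] [MeasurableSpace E] [BorelSpace E]
    {μ : Measure E} [μ.IsAddHaarMeasure] {p : ℝ → Prop} (hp : MeasurableSet {r | p r})
    (h : ∀ᵐ x ∂μ, p ‖x‖) : ∀ᵐ r ∂volume.restrict (Ioi 0), p r := by
  set d := Module.finrank ℝ E
  set φ : ℝ → ℝ := {r | p r}ᶜ.indicator fun r ↦ rexp (-r)
  have hφ : ∫ x, φ ‖x‖ ∂μ = 0 := integral_eq_zero_of_ae <| h.mono fun x hx ↦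
    indicator_of_notMem (by simpa using hx) _
  have hball : μ.real (Metric.ball 0 1) ≠ 0 := fun h0 ↦
    (Metric.measure_ball_pos μ 0 one_pos).ne' ((measureReal_eq_zero_iff).1 h0)
  have hI : ∫ r in Ioi 0, r ^ (d - 1) • φ r = 0 := by
    simpa [integral_fun_norm_addHaar, d, Module.finrank_pos.ne', hball] using hφ
  have hint : IntegrableOn (fun r ↦ r ^ (d - 1) • φ r) (Ioi 0) := by
    have hgamma : IntegrableOn (fun r : ℝ ↦ r ^ (d - 1) * rexp (-r)) (Ioi 0) := by
      refine (GammaIntegral_convergent (s := d) (by simp [d, Module.finrank_pos])).congr_fun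
        (fun r _ ↦ ?_) measurableSet_Ioi
      dsimp only
      rw [mul_comm, ← Nat.cast_pred Module.finrank_pos, rpow_natCast]
    refine hgamma.mono' ((measurable_id.pow_const _).smul
      ((measurable_exp.comp measurable_neg).indicator hp.compl)).aestronglyMeasurable ?_
    filter_upwards [ae_restrict_mem measurableSet_Ioi] with r (hr : 0 < r)
    rw [norm_smul, norm_pow, Real.norm_of_nonneg hr.le]
    gcongr
    exact (norm_indicator_le_norm_self _ _).trans (Real.norm_of_nonneg (exp_pos _).le).le
  have hnn : 0 ≤ᵐ[volume.restrict (Ioi 0)] fun r ↦ r ^ (d - 1) • φ r := by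
    filter_upwards [ae_restrict_mem measurableSet_Ioi] with r (hr : 0 < r)
    exact mul_nonneg (by positivity) (indicator_nonneg (fun _ _ ↦ (exp_pos _).le) _)
  filter_upwards [(integral_eq_zero_iff_of_nonneg_ae hnn hint).1 hI,
    ae_restrict_mem measurableSet_Ioi] with r hr (hr0 : 0 < r)
  by_contra hpr
  simp [φ, hpr, hr0.ne', exp_ne_zero] at hr


theorem one_add_pow_mul_exp_le (N : ℕ) (a : ℝ) {r : ℝ} (hr : 0 ≤ r) :
    (1 + r) ^ N * rexp (a * r - r ^ 2) ≤ rexp ((N + a) ^ 2) * rexp (-(1 / 2) * r ^ 2) := by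
  calc (1 + r) ^ N * rexp (a * r - r ^ 2)
      ≤ rexp r ^ N * rexp (a * r - r ^ 2) := by gcongr; linarith [add_one_le_exp r]
    _ = rexp (N * r + (a * r - r ^ 2)) := by rw [← exp_nat_mul, exp_add]
    _ ≤ rexp ((N + a) ^ 2 + -(1 / 2) * r ^ 2) := by
        exact exp_le_exp.2 (by nlinarith [sq_nonneg ((N : ℝ) + a - r)])
    _ = _ := exp_add _ _

section InnerProductSpace

variable {V : Type*} [NormedAddCommGroup V] [InnerProductSpace ℝ V]

theorem exp_inner_mul_exp_neg_sq_norm (y w : V) :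
    rexp ⟪y, w⟫ * rexp (-‖y‖ ^ 2) = rexp (‖w‖ ^ 2 / 4) * rexp (-‖y - (2⁻¹ : ℝ) • w‖ ^ 2) := by
  rw [← exp_add, ← exp_add, norm_sub_sq_real, inner_smul_right, norm_smul, mul_pow,
    Real.norm_of_nonneg (by norm_num : (0 : ℝ) ≤ 2⁻¹)]
  ring_nf

variable [FiniteDimensional ℝ V] [MeasurableSpace V] [BorelSpace V]

theorem integrable_exp_neg_mul_sq_norm {b : ℝ} (hb : 0 < b) :
    Integrable fun v : V ↦ rexp (-b * ‖v‖ ^ 2) :=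
  .of_integral_ne_zero (by rw [GaussianFourier.integral_rexp_neg_mul_sq_norm hb]; positivity)

theorem integrable_exp_neg_sq_norm_add_mul [Nontrivial V] {f : ℝ → ℝ} (hfm : Measurable f)
    {C : ℝ} {N : ℕ} (hf : ∀ r > 0, |f r| ≤ C * (1 + r) ^ N) (ζ : V) :
    Integrable fun y : V ↦ rexp (-‖y + ζ‖ ^ 2) * f ‖y‖ := by
  have hC : 0 ≤ C :=
    nonneg_of_mul_nonneg_left ((abs_nonneg _).trans (hf 1 one_pos)) (by positivity)
  refine ((integrable_exp_neg_mul_sq_norm (V := V) one_half_pos).const_mul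
    (C * rexp ((N + 2 * ‖ζ‖) ^ 2))).mono' (by fun_prop) ?_
  filter_upwards [volume.ae_ne (0 : V)] with y hy
  have hsq : ‖y‖ ^ 2 - 2 * ‖ζ‖ * ‖y‖ ≤ ‖y + ζ‖ ^ 2 := by
    nlinarith [norm_add_sq_real y ζ, neg_le_of_abs_le (abs_real_inner_le_norm y ζ), norm_nonneg ζ]
  calc ‖rexp (-‖y + ζ‖ ^ 2) * f ‖y‖‖
      ≤ rexp (2 * ‖ζ‖ * ‖y‖ - ‖y‖ ^ 2) * (C * (1 + ‖y‖) ^ N) := by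
        rw [norm_mul, Real.norm_of_nonneg (exp_pos _).le, Real.norm_eq_abs]
        gcongr
        · linarith
        · exact hf _ (norm_pos_iff.2 hy)
    _ = C * ((1 + ‖y‖) ^ N * rexp (2 * ‖ζ‖ * ‖y‖ - ‖y‖ ^ 2)) := by ring
    _ ≤ C * (rexp ((N + 2 * ‖ζ‖) ^ 2) * rexp (-(1 / 2) * ‖y‖ ^ 2)) := by
        exact mul_le_mul_of_nonneg_left (one_add_pow_mul_exp_le N _ (norm_nonneg y)) hC
    _ = _ := by ring

end InnerProductSpace


theorem gaussWeierstrass_injective_radial_plane_general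
    (f₁ f₂ : ℝ → ℝ) (hf₁m : Measurable f₁) (hf₂m : Measurable f₂)
    (C : ℝ) (N : ℕ)
    (hf₁ : ∀ r > (0 : ℝ), |f₁ r| ≤ C * (1 + r) ^ N)
    (hf₂ : ∀ r > (0 : ℝ), |f₂ r| ≤ C * (1 + r) ^ N)
    (h : ∀ ζ : EuclideanSpace ℝ (Fin 2),
      (∫ y : EuclideanSpace ℝ (Fin 2), Real.exp (-‖y + ζ‖ ^ 2) * f₁ ‖y‖)
        = ∫ y : EuclideanSpace ℝ (Fin 2), Real.exp (-‖y + ζ‖ ^ 2) * f₂ ‖y‖) :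
    ∀ᵐ r ∂(volume.restrict (Set.Ioi (0 : ℝ))), f₁ r = f₂ r := by
  have hker (ζ : EuclideanSpace ℝ (Fin 2)) :
      Integrable (fun y ↦ rexp (-‖y + ζ‖ ^ 2) * (f₁ ‖y‖ - f₂ ‖y‖)) ∧
        ∫ y, rexp (-‖y + ζ‖ ^ 2) * (f₁ ‖y‖ - f₂ ‖y‖) = 0 := by
    have h₁ := integrable_exp_neg_sq_norm_add_mul hf₁m hf₁ ζ
    have h₂ := integrable_exp_neg_sq_norm_add_mul hf₂m hf₂ ζ
    simp_rw [mul_sub]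
    exact ⟨h₁.sub h₂, by rw [integral_sub h₁ h₂, h ζ, sub_self]⟩
  have hsquare (w y : EuclideanSpace ℝ (Fin 2)) :
      rexp ⟪y, w⟫ * (rexp (-‖y‖ ^ 2) * (f₁ ‖y‖ - f₂ ‖y‖)) =
        rexp (‖w‖ ^ 2 / 4) * (rexp (-‖y + -((2⁻¹ : ℝ) • w)‖ ^ 2) * (f₁ ‖y‖ - f₂ ‖y‖)) := by
    rw [← mul_assoc, exp_inner_mul_exp_neg_sq_norm, ← sub_eq_add_neg, mul_assoc]
  have hG : (fun y : EuclideanSpace ℝ (Fin 2) ↦ rexp (-‖y‖ ^ 2) * (f₁ ‖y‖ - f₂ ‖y‖))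
      =ᵐ[volume] 0 :=
    ae_eq_zero_of_integral_exp_inner_mul_eq_zero
      (fun w ↦ by simpa only [hsquare] using (hker _).1.const_mul _)
      (fun w ↦ by simp only [hsquare, integral_const_mul, (hker _).2, mul_zero])
  refine ae_restrict_Ioi_of_ae_norm (measurableSet_eq_fun hf₁m hf₂m) (hG.mono fun y hy ↦ ?_)
  exact sub_eq_zero.1 ((mul_eq_zero.1 hy).resolve_left (exp_ne_zero _))

/-- **Planar injectivity of the Gauss–Weierstrass transform for radial functions.**
If `f₁, f₂ : (0,∞) → ℝ` are measurable of polynomial growth and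
`∫_{ℝ²} exp(−|y+ζ|²) f₁(|y|) dy = ∫_{ℝ²} exp(−|y+ζ|²) f₂(|y|) dy` for every `ζ ∈ ℝ²`,
then `f₁ = f₂` a.e. on `(0,∞)`. -/
theorem gaussWeierstrass_injective_radial_plane
    (f₁ f₂ : ℝ → ℝ) (hf₁m : Measurable f₁) (hf₂m : Measurable f₂)
    (C : ℝ) (hC : 0 < C) (N : ℕ)
    (hf₁ : ∀ r > (0 : ℝ), |f₁ r| ≤ C * (1 + r) ^ N)
    (hf₂ : ∀ r > (0 : ℝ), |f₂ r| ≤ C * (1 + r) ^ N)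
    (h : ∀ ζ : EuclideanSpace ℝ (Fin 2),
      (∫ y : EuclideanSpace ℝ (Fin 2), Real.exp (-‖y + ζ‖ ^ 2) * f₁ ‖y‖)
        = ∫ y : EuclideanSpace ℝ (Fin 2), Real.exp (-‖y + ζ‖ ^ 2) * f₂ ‖y‖) :
    ∀ᵐ r ∂(volume.restrict (Set.Ioi (0 : ℝ))), f₁ r = f₂ r :=
  gaussWeierstrass_injective_radial_plane_general f₁ f₂ hf₁m hf₂m C N hf₁ hf₂ h
end
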